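/- Let T = [a1, …, an] be a nonempty list of integers with all ai ≥ 2, and let ld_j(T) = (d(T_{<j}) + d(T_{>j}))/d(T) be the log discrepancy of the j-th entry, where d is the tridiagonal discriminant. Then 0 < ld_j(T) ≤ 1 for every j, and ld_j(T) = 1 for some j if and only if all entries of T equal 2 (in which case ld_j(T) = 1 for every j). -/

import Mathlib

/-!
The discriminant satisfies the continuant recursion `d(a :: b :: T) = a d(b :: T) - d(T)`, so the
pair `(d(T), d(tail T))` is the fold over `T` of the linear step `(x, y) ↦ (a x - y, x)`, started
at `(1, 0)`. For `a ≥ 2` this step preserves `0 ≤ y ≤ x` and raises the gap `x - y` by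
`(a - 2) x ≥ 0`. Splitting `T = P ++ a :: Q` at the `j`-th entry and writing `(q, q')` for the
pair of `Q`, linearity of the fold expresses `d(T) - d(P)` as the fold over `P` started at
`(a q - q' - 1, q)`. Hence `d(T) - d(P) - d(Q)` is the sum of three nonnegative defects:
`(a - 2) q`, `q - q' - 1`, and the growth of the first coordinate along `P`; they all vanish only
when every entry is `2`. As `d ≥ 1`, this gives `0 < ld_j ≤ 1`, with equality exactly for
`(−2)`-chains, for which `d(T) = length T + 1`.
-/

/-- The tridiagonal matrix with diagonal entries given by the list `T`
and entries `-1` on the sub- and super-diagonal. -/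
def tridiagMatrix (T : List ℤ) : Matrix (Fin T.length) (Fin T.length) ℤ :=
  Matrix.of fun i j =>
    if i = j then T.get i
    else if (i : ℕ) + 1 = (j : ℕ) ∨ (j : ℕ) + 1 = (i : ℕ) then -1 else 0

/-- The discriminant of a chain `T`: the determinant of the associated tridiagonal
matrix (so the discriminant of the empty list is `1`). -/
def chainDisc (T : List ℤ) : ℤ := (tridiagMatrix T).det

/-- The log discrepancy of the `j`-th entry (1-indexed) of the chain `T`:
`ld_j(T) = (d(T_{<j}) + d(T_{>j})) / d(T)`, where `T_{<j}` is the prefix before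
position `j` and `T_{>j}` the suffix after position `j`. -/
def chainLd (T : List ℤ) (j : ℕ) : ℚ :=
  ((chainDisc (T.take (j - 1)) : ℚ) + (chainDisc (T.drop j) : ℚ)) / (chainDisc T : ℚ)

theorem Matrix.det_eq_of_row_zero_col_zero {R : Type*} [CommRing R] {n : ℕ}
    (A : Matrix (Fin (n + 2)) (Fin (n + 2)) R)
    (hrow : ∀ j : Fin n, A 0 j.succ.succ = 0) (hcol : ∀ i : Fin n, A i.succ.succ 0 = 0) :
    A.det = A 0 0 * (A.submatrix Fin.succ Fin.succ).det
      - A 0 1 * A 1 0 * (A.submatrix (Fin.succ ∘ Fin.succ) (Fin.succ ∘ Fin.succ)).det := by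
  have hminor : (A.submatrix Fin.succ (Fin.succAbove 1)).det
      = A 1 0 * (A.submatrix (Fin.succ ∘ Fin.succ) (Fin.succ ∘ Fin.succ)).det := by
    rw [Matrix.det_succ_column_zero, Fin.sum_univ_succ,
      Finset.sum_eq_zero (fun i _ => by simp [hcol])]
    simp only [Fin.val_zero, pow_zero, one_mul, add_zero, Matrix.submatrix_apply,
      Fin.one_succAbove_zero, Fin.succAbove_zero, Matrix.submatrix_submatrix]
    rfl
  rw [Matrix.det_succ_row_zero, Fin.sum_univ_succ, Fin.sum_univ_succ,
    Finset.sum_eq_zero (fun j _ => by rw [hrow j, mul_zero, zero_mul]), Fin.succAbove_zero,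
    Fin.succ_zero_eq_one, hminor]
  simp only [Fin.val_zero, pow_zero, one_mul, Fin.val_one, pow_one, add_zero]
  ring

theorem submatrix_succ_tridiagMatrix_cons (a : ℤ) (L : List ℤ) :
    (tridiagMatrix (a :: L)).submatrix Fin.succ Fin.succ = tridiagMatrix L := by
  ext i j
  simp [tridiagMatrix, Fin.succ_inj]

theorem chainDisc_nil : chainDisc [] = 1 := by
  simp [chainDisc]

theorem chainDisc_singleton (a : ℤ) : chainDisc [a] = a := by
  simp [chainDisc, tridiagMatrix]

theorem chainDisc_cons_cons (a b : ℤ) (T : List ℤ) :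
    chainDisc (a :: b :: T) = a * chainDisc (b :: T) - chainDisc T := by
  rw [chainDisc, Matrix.det_eq_of_row_zero_col_zero (n := T.length)]
  · rw [← Matrix.submatrix_submatrix, submatrix_succ_tridiagMatrix_cons,
      submatrix_succ_tridiagMatrix_cons]
    simp [tridiagMatrix, chainDisc]
  all_goals intro j; simp [tridiagMatrix, (Fin.succ_ne_zero _).symm]

def contStep (a : ℤ) (v : ℤ × ℤ) : ℤ × ℤ := (a * v.1 - v.2, v.1)

theorem foldr_contStep_sub (T : List ℤ) (u w : ℤ × ℤ) :
    T.foldr contStep (u - w) = T.foldr contStep u - T.foldr contStep w := by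
  induction T with
  | nil => rfl
  | cons a T ih =>
    simp only [List.foldr_cons, ih, contStep]
    ext <;> simp only [Prod.fst_sub, Prod.snd_sub]
    ring

section Monotone

variable {T : List ℤ} {u : ℤ × ℤ} (hT : ∀ x ∈ T, 2 ≤ x) (h0 : 0 ≤ u.2) (h1 : u.2 ≤ u.1)
include hT h0 h1

theorem foldr_contStep_mono :
    u.2 ≤ (T.foldr contStep u).2 ∧
      u.1 - u.2 ≤ (T.foldr contStep u).1 - (T.foldr contStep u).2 := by
  induction T with
  | nil => simp
  | cons x T ih =>
    obtain ⟨hsnd, hgap⟩ := ih fun y hy => hT y (List.mem_cons_of_mem x hy)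
    have hx : 0 ≤ (x - 2) * (T.foldr contStep u).1 :=
      mul_nonneg (by linarith [hT x List.mem_cons_self]) (by linarith)
    simp only [List.foldr_cons, contStep]
    constructor <;> linarith

theorem forall_eq_two_of_foldr_contStep_gap_eq (hpos : 0 < u.1)
    (heq : (T.foldr contStep u).1 - (T.foldr contStep u).2 = u.1 - u.2) : ∀ x ∈ T, x = 2 := by
  induction T with
  | nil => simp
  | cons x T ih =>
    have hT' : ∀ y ∈ T, 2 ≤ y := fun y hy => hT y (List.mem_cons_of_mem x hy)
    obtain ⟨hsnd, hgap⟩ := foldr_contStep_mono hT' h0 h1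
    have hx := hT x List.mem_cons_self
    set w := T.foldr contStep u
    simp only [List.foldr_cons, contStep] at heq
    have hw : 0 < w.1 := by linarith
    have hxw : 0 ≤ (x - 2) * w.1 := mul_nonneg (by linarith) hw.le
    have hgapT : w.1 - w.2 = u.1 - u.2 := by linarith
    have hx2 : x = 2 := by
      have : (x - 2) * w.1 = 0 := by linarith
      linarith [(mul_eq_zero.mp this).resolve_right hw.ne']
    intro y hy
    rcases List.mem_cons.mp hy with rfl | hy
    · exact hx2
    · exact ih hT' hgapT y hy

theorem le_foldr_contStep_fst : u.1 ≤ (T.foldr contStep u).1 := by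
  linarith [foldr_contStep_mono hT h0 h1]

theorem forall_eq_two_of_foldr_contStep_fst_eq (hpos : 0 < u.1)
    (heq : (T.foldr contStep u).1 = u.1) : ∀ x ∈ T, x = 2 := by
  obtain ⟨hsnd, hgap⟩ := foldr_contStep_mono hT h0 h1
  exact forall_eq_two_of_foldr_contStep_gap_eq hT h0 h1 hpos (by linarith)

end Monotone

def contPair (T : List ℤ) : ℤ × ℤ := T.foldr contStep (1, 0)

theorem contPair_cons (a : ℤ) (T : List ℤ) :
    contPair (a :: T) = (chainDisc (a :: T), chainDisc T) := by
  induction T generalizing a with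
  | nil => simp [contPair, contStep, chainDisc_singleton, chainDisc_nil]
  | cons b T ih =>
    have : contPair (a :: b :: T) = contStep a (contPair (b :: T)) := rfl
    rw [this, ih, contStep, chainDisc_cons_cons]

theorem chainDisc_eq_contPair_fst (T : List ℤ) : chainDisc T = (contPair T).1 := by
  cases T with
  | nil => exact chainDisc_nil
  | cons a T => rw [contPair_cons]

theorem contPair_of_forall_eq_two {T : List ℤ} (h : ∀ x ∈ T, x = 2) :
    contPair T = ((T.length : ℤ) + 1, (T.length : ℤ)) := by
  induction T with
  | nil => rfl
  | cons x T ih =>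
    have : contPair (x :: T) = contStep x (contPair T) := rfl
    rw [this, ih fun y hy => h y (List.mem_cons_of_mem x hy), contStep, h x List.mem_cons_self,
      List.length_cons]
    ext <;> push_cast <;> ring

theorem chainDisc_of_forall_eq_two {T : List ℤ} (h : ∀ x ∈ T, x = 2) :
    chainDisc T = T.length + 1 := by
  rw [chainDisc_eq_contPair_fst, contPair_of_forall_eq_two h]

section Admissible

variable {T : List ℤ} (hT : ∀ x ∈ T, 2 ≤ x)
include hT

theorem contPair_snd_nonneg : 0 ≤ (contPair T).2 :=
  (foldr_contStep_mono hT (u := (1, 0)) le_rfl zero_le_one).1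

theorem one_le_contPair_gap : 1 ≤ (contPair T).1 - (contPair T).2 :=
  (foldr_contStep_mono hT (u := (1, 0)) le_rfl zero_le_one).2

theorem forall_eq_two_of_contPair_gap_eq_one (h : (contPair T).1 - (contPair T).2 = 1) :
    ∀ x ∈ T, x = 2 :=
  forall_eq_two_of_foldr_contStep_gap_eq hT (u := (1, 0)) le_rfl zero_le_one one_pos h

theorem one_le_chainDisc : 1 ≤ chainDisc T := by
  rw [chainDisc_eq_contPair_fst]
  linarith [contPair_snd_nonneg hT, one_le_contPair_gap hT]

end Admissible
theorem chainDisc_append_cons_sub (P Q : List ℤ) (a : ℤ) :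
    chainDisc (P ++ a :: Q) - chainDisc P
      = (P.foldr contStep (a * (contPair Q).1 - (contPair Q).2 - 1, (contPair Q).1)).1 := by
  have hu : (a * (contPair Q).1 - (contPair Q).2 - 1, (contPair Q).1)
      = contStep a (contPair Q) - (1, 0) := by
    ext <;> simp [contStep]
  rw [chainDisc_eq_contPair_fst, chainDisc_eq_contPair_fst, contPair, contPair,
    List.foldr_append, List.foldr_cons, hu, foldr_contStep_sub, Prod.fst_sub]
  rfl

section Split

variable {P Q : List ℤ} {a : ℤ} (hP : ∀ x ∈ P, 2 ≤ x) (ha : 2 ≤ a) (hQ : ∀ x ∈ Q, 2 ≤ x)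
include hP ha hQ

theorem chainDisc_add_le_append_cons : chainDisc P + chainDisc Q ≤ chainDisc (P ++ a :: Q) := by
  set q := contPair Q
  have hq := contPair_snd_nonneg hQ
  have hgap := one_le_contPair_gap hQ
  have haq : 0 ≤ (a - 2) * q.1 := mul_nonneg (by linarith) (by linarith)
  have hv := le_foldr_contStep_fst hP (u := (a * q.1 - q.2 - 1, q.1))
    (by dsimp only; linarith) (by dsimp only; linarith)
  linarith [chainDisc_append_cons_sub P Q a, chainDisc_eq_contPair_fst Q]

theorem chainDisc_append_cons_eq_add_iff :
    chainDisc (P ++ a :: Q) = chainDisc P + chainDisc Q ↔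
      (∀ x ∈ P, x = 2) ∧ a = 2 ∧ ∀ x ∈ Q, x = 2 := by
  constructor
  · intro heq
    set q := contPair Q
    set u : ℤ × ℤ := (a * q.1 - q.2 - 1, q.1)
    have hq := contPair_snd_nonneg hQ
    have hgap := one_le_contPair_gap hQ
    have haq : 0 ≤ (a - 2) * q.1 := mul_nonneg (by linarith) (by linarith)
    have hu0 : 0 ≤ u.2 := by dsimp only [u]; linarith
    have hu1 : u.2 ≤ u.1 := by dsimp only [u]; linarith
    have hv := le_foldr_contStep_fst hP hu0 hu1
    have hdefect : (P.foldr contStep u).1 - u.1 + (a - 2) * q.1 + (q.1 - q.2 - 1) = 0 := by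
      linarith [chainDisc_append_cons_sub P Q a, chainDisc_eq_contPair_fst Q]
    have ha2 : (a - 2) * q.1 = 0 := by linarith
    refine ⟨forall_eq_two_of_foldr_contStep_fst_eq hP hu0 hu1 (by dsimp only [u]; linarith)
        (by linarith), ?_, forall_eq_two_of_contPair_gap_eq_one hQ (by linarith)⟩
    linarith [(mul_eq_zero.mp ha2).resolve_right (by linarith)]
  · rintro ⟨hP2, rfl, hQ2⟩
    have hall : ∀ x ∈ P ++ 2 :: Q, x = 2 :=
      List.forall_mem_append.mpr ⟨hP2, List.forall_mem_cons.mpr ⟨rfl, hQ2⟩⟩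
    rw [chainDisc_of_forall_eq_two hall, chainDisc_of_forall_eq_two hP2,
      chainDisc_of_forall_eq_two hQ2, List.length_append, List.length_cons]
    push_cast
    ring

end Split

theorem List.exists_eq_append_cons_length_eq {α : Type*} {l : List α} {i : ℕ}
    (h : i < l.length) : ∃ P a Q, l = P ++ a :: Q ∧ P.length = i :=
  ⟨l.take i, l[i], l.drop (i + 1), by rw [List.getElem_cons_drop, List.take_append_drop],
    List.length_take_of_le h.le⟩

theorem chainLd_append_cons_pos_le_one_eq_one_iff {P Q : List ℤ} {a : ℤ}
    (h : ∀ x ∈ P ++ a :: Q, 2 ≤ x) :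
    0 < chainLd (P ++ a :: Q) (P.length + 1) ∧ chainLd (P ++ a :: Q) (P.length + 1) ≤ 1 ∧
      (chainLd (P ++ a :: Q) (P.length + 1) = 1 ↔ ∀ x ∈ P ++ a :: Q, x = 2) := by
  have hd : (0 : ℚ) < chainDisc (P ++ a :: Q) := by exact_mod_cast one_le_chainDisc h
  simp only [List.forall_mem_append, List.forall_mem_cons] at h ⊢
  obtain ⟨hP, ha, hQ⟩ := h
  have hsum : (0 : ℚ) < chainDisc P + chainDisc Q := by
    have : 0 < chainDisc P + chainDisc Q := by
      linarith [one_le_chainDisc hP, one_le_chainDisc hQ]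
    exact_mod_cast this
  have hle : (chainDisc P + chainDisc Q : ℚ) ≤ chainDisc (P ++ a :: Q) := by
    exact_mod_cast chainDisc_add_le_append_cons hP ha hQ
  have hTake : (P ++ a :: Q).take (P.length + 1 - 1) = P := by simp
  have hDrop : (P ++ a :: Q).drop (P.length + 1) = Q := by simp
  rw [chainLd, hTake, hDrop, div_le_one hd, div_eq_one_iff_eq hd.ne', eq_comm,
    ← chainDisc_append_cons_eq_add_iff hP ha hQ]
  exact ⟨div_pos hsum hd, hle, by exact_mod_cast Iff.rfl⟩

/-- **Admissible chains are log terminal, and canonical exactly for `(−2)`-chains.**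
If `T` is a nonempty list of integers `≥ 2`, then `0 < ld_j(T) ≤ 1` for every
`1 ≤ j ≤ n`; moreover `ld_j(T) = 1` for some such `j` if and only if all entries of `T`
equal `2`, in which case `ld_j(T) = 1` for every `1 ≤ j ≤ n`. -/
theorem chainLd_pos_le_one (T : List ℤ) (hT : T ≠ []) (h : ∀ a ∈ T, 2 ≤ a) :
    (∀ j, 1 ≤ j → j ≤ T.length → 0 < chainLd T j ∧ chainLd T j ≤ 1) ∧
    ((∃ j, 1 ≤ j ∧ j ≤ T.length ∧ chainLd T j = 1) ↔ ∀ a ∈ T, a = 2) ∧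
    ((∀ a ∈ T, a = 2) → ∀ j, 1 ≤ j → j ≤ T.length → chainLd T j = 1) := by
  have key : ∀ j, 1 ≤ j → j ≤ T.length →
      0 < chainLd T j ∧ chainLd T j ≤ 1 ∧ (chainLd T j = 1 ↔ ∀ a ∈ T, a = 2) := by
    intro j hj1 hj2
    obtain ⟨P, a, Q, rfl, hlenP⟩ := List.exists_eq_append_cons_length_eq (l := T) (i := j - 1)
      (by omega)
    rw [show j = P.length + 1 by omega]
    exact chainLd_append_cons_pos_le_one_eq_one_iff h
  have hlen : 1 ≤ T.length := List.length_pos_iff.mpr hT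
  refine ⟨fun j hj1 hj2 => ⟨(key j hj1 hj2).1, (key j hj1 hj2).2.1⟩,
    ⟨fun ⟨j, hj1, hj2, hj⟩ => (key j hj1 hj2).2.2.mp hj,
      fun h2 => ⟨1, le_rfl, hlen, (key 1 le_rfl hlen).2.2.mpr h2⟩⟩,
    fun h2 j hj1 hj2 => (key j hj1 hj2).2.2.mpr h2⟩
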